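/- Let p > 1 and x > 0. Then the function f₃(t) = sinh_p(x/t)^t is strictly decreasing on (0, ∞), and log f₃ is concave on (0, ∞). -/

import Mathlib

open Real Set Filter Topology

/-- Generalized inverse sine: `arcsin_p x = ∫₀ˣ (1 - tᵖ)^(-1/p) dt`. -/
noncomputable def arcsinp (p : ℝ) (x : ℝ) : ℝ := ∫ t in (0:ℝ)..x, (1 - t ^ p) ^ (-1 / p)

/-- Generalized π: `π_p = 2 · arcsin_p 1`. -/
noncomputable def pip (p : ℝ) : ℝ := 2 * arcsinp p 1

/-- Generalized sine: the inverse of `arcsinp p` (as a map from `[0,1]`). -/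
noncomputable def sinp (p : ℝ) : ℝ → ℝ := Function.invFunOn (arcsinp p) (Set.Icc 0 1)

/-- Generalized cosine. -/
noncomputable def cosp (p : ℝ) (x : ℝ) : ℝ := (1 - (sinp p x) ^ p) ^ (1 / p)

/-- Generalized tangent. -/
noncomputable def tanp (p : ℝ) (x : ℝ) : ℝ := sinp p x / cosp p x

/-- Generalized inverse hyperbolic sine: `arsinh_p x = ∫₀ˣ (1 + tᵖ)^(-1/p) dt`. -/
noncomputable def arsinhp (p : ℝ) (x : ℝ) : ℝ := ∫ t in (0:ℝ)..x, (1 + t ^ p) ^ (-1 / p)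

/-- Generalized hyperbolic sine: the inverse of `arsinhp p` (as a map from `[0,∞)`). -/
noncomputable def sinhp (p : ℝ) : ℝ → ℝ := Function.invFunOn (arsinhp p) (Set.Ici 0)

/-- Generalized hyperbolic cosine. -/
noncomputable def coshp (p : ℝ) (x : ℝ) : ℝ := (1 + (sinhp p x) ^ p) ^ (1 / p)

/-- Generalized hyperbolic tangent. -/
noncomputable def tanhp (p : ℝ) (x : ℝ) : ℝ := sinhp p x / coshp p x

/-!
Write `F x t = t * log (sinhp p (x / t)) = log (sinhp p (x / t) ^ t)`, the perspective of
`φ = log ∘ sinhp`. Since `sinhp' = coshp`, we have `φ' = coshp / sinhp = (1 + sinhp ^ (-p)) ^ (1 / p)`,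
which is strictly decreasing; hence `∂F/∂t = φ u - u * φ' u` at `u = x / t` is increasing in `u`,
i.e. decreasing in `t`, and `F x` is strictly concave. The integral bounds
`log (1 + y) ≤ arsinhp p y ≤ arsinhp p 1 + log y` give `x - arsinhp p 1 * t ≤ F x t < x` for small `t`,
so `F x t → x` as `t → 0⁺` while staying below `x`; a concave function with this behaviour at the
left end of `(0, ∞)` is strictly decreasing.
-/

variable {p : ℝ}

lemma one_add_rpow_pos (hp : 0 < p) {t : ℝ} (ht : -1 < t) : 0 < 1 + t ^ p := by
  rcases le_or_gt 0 t with h | h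
  · linarith [rpow_nonneg h p]
  · have : |t| ^ p < 1 := rpow_lt_one (abs_nonneg t) (by rw [abs_of_neg h]; linarith) hp
    linarith [neg_abs_le (t ^ p), abs_rpow_le_abs_rpow t p]

lemma continuousAt_one_add_rpow_rpow (hp : 0 < p) (q : ℝ) {t : ℝ} (ht : -1 < t) :
    ContinuousAt (fun t : ℝ => (1 + t ^ p) ^ q) t :=
  (continuousAt_const.add (continuousAt_rpow_const t p (Or.inr hp.le))).rpow_const
    (Or.inl (one_add_rpow_pos hp ht).ne')

lemma inv_one_add_le_one_add_rpow_rpow (hp : 1 ≤ p) {t : ℝ} (ht : 0 ≤ t) :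
    (1 + t)⁻¹ ≤ (1 + t ^ p) ^ (-1 / p) := by
  have hp₀ : 0 < p := by linarith
  calc (1 + t)⁻¹ = ((1 + t) ^ p) ^ (-1 / p) := by
        rw [← rpow_mul (by linarith), mul_div_cancel₀ (-1) hp₀.ne', rpow_neg_one]
    _ ≤ (1 + t ^ p) ^ (-1 / p) := by
        refine rpow_le_rpow_of_nonpos (one_add_rpow_pos hp₀ (by linarith)) ?_
          (div_nonpos_of_nonpos_of_nonneg (by norm_num) hp₀.le)
        simpa only [one_rpow] using add_rpow_le_rpow_add zero_le_one ht hp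

lemma one_add_rpow_rpow_le_inv (hp : 0 < p) {t : ℝ} (ht : 0 < t) :
    (1 + t ^ p) ^ (-1 / p) ≤ t⁻¹ := by
  calc (1 + t ^ p) ^ (-1 / p) ≤ (t ^ p) ^ (-1 / p) :=
        rpow_le_rpow_of_nonpos (rpow_pos_of_pos ht p) (by linarith)
          (div_nonpos_of_nonpos_of_nonneg (by norm_num) hp.le)
    _ = t⁻¹ := by rw [← rpow_mul ht.le, mul_div_cancel₀ (-1) hp.ne', rpow_neg_one]

lemma one_add_rpow_rpow_div_self (hp : 0 < p) {r : ℝ} (hr : 0 < r) :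
    (1 + r ^ p) ^ (1 / p) / r = (1 + r ^ (-p)) ^ (1 / p) := by
  have hrp : 0 < r ^ p := rpow_pos_of_pos hr p
  have hsplit : 1 + r ^ (-p) = (1 + r ^ p) / r ^ p := by
    rw [rpow_neg hr.le]; field_simp [hrp.ne']; ring
  rw [hsplit, div_rpow (by linarith) hrp.le, ← rpow_mul hr.le, mul_one_div_cancel hp.ne',
    rpow_one]

lemma strictAntiOn_one_add_rpow_rpow_div_self (hp : 0 < p) :
    StrictAntiOn (fun r : ℝ => (1 + r ^ p) ^ (1 / p) / r) (Ioi 0) := by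
  intro r hr s hs hrs
  simp only [one_add_rpow_rpow_div_self hp hr, one_add_rpow_rpow_div_self hp hs]
  have hlt : s ^ (-p) < r ^ (-p) := rpow_lt_rpow_of_neg hr hrs (by linarith)
  have hpos : 0 < s ^ (-p) := rpow_pos_of_pos hs (-p)
  exact rpow_lt_rpow (by linarith) (by linarith) (by positivity)

lemma sub_le_sub_of_hasDerivAt_le {f g f' g' : ℝ → ℝ} {a b : ℝ} (hab : a ≤ b)
    (hf : ∀ x ∈ Icc a b, HasDerivAt f (f' x) x) (hg : ∀ x ∈ Icc a b, HasDerivAt g (g' x) x)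
    (hle : ∀ x ∈ Ioo a b, f' x ≤ g' x) : f b - f a ≤ g b - g a := by
  have hmono : MonotoneOn (fun x => g x - f x) (Icc a b) := by
    refine monotoneOn_of_hasDerivWithinAt_nonneg (f' := fun x => g' x - f' x) (convex_Icc a b)
      (fun x hx => ((hg x hx).sub (hf x hx)).continuousAt.continuousWithinAt) ?_ ?_ <;>
      rw [interior_Icc]
    · exact fun x hx =>
        ((hg x (Ioo_subset_Icc_self hx)).sub (hf x (Ioo_subset_Icc_self hx))).hasDerivWithinAt
    · exact fun x hx => sub_nonneg.2 (hle x hx)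
  linarith [hmono (left_mem_Icc.2 hab) (right_mem_Icc.2 hab) hab]

lemma strictMonoOn_sub_mul_of_hasDerivAt {φ φ' : ℝ → ℝ}
    (hφ : ∀ u ∈ Ioi (0 : ℝ), HasDerivAt φ (φ' u) u) (hφ' : StrictAntiOn φ' (Ioi 0)) :
    StrictMonoOn (fun u => φ u - u * φ' u) (Ioi 0) := by
  intro u₁ hu₁ u₂ hu₂ hu
  obtain ⟨c, hc, hslope⟩ := exists_hasDerivAt_eq_slope φ φ' hu
    (fun u hu => (hφ u (lt_of_lt_of_le hu₁ hu.1)).continuousAt.continuousWithinAt)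
    (fun u hu => hφ u (lt_trans hu₁ hu.1))
  have hmvt : φ u₂ - φ u₁ = φ' c * (u₂ - u₁) := by
    rw [hslope]; field_simp [sub_ne_zero.2 hu.ne']
  have hc₂ : φ' u₂ * (u₂ - u₁) < φ' c * (u₂ - u₁) :=
    mul_lt_mul_of_pos_right (hφ' (lt_trans hu₁ hc.1) hu₂ hc.2) (sub_pos.2 hu)
  have h₁₂ : u₁ * φ' u₂ < u₁ * φ' u₁ := mul_lt_mul_of_pos_left (hφ' hu₁ hu₂ hu) hu₁
  show φ u₁ - u₁ * φ' u₁ < φ u₂ - u₂ * φ' u₂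
  linarith

lemma strictConcaveOn_mul_comp_div {φ φ' : ℝ → ℝ} {x : ℝ} (hx : 0 < x)
    (hφ : ∀ u ∈ Ioi (0 : ℝ), HasDerivAt φ (φ' u) u) (hφ' : StrictAntiOn φ' (Ioi 0)) :
    StrictConcaveOn ℝ (Ioi 0) (fun t => t * φ (x / t)) := by
  have hderiv : ∀ t ∈ Ioi (0 : ℝ),
      HasDerivAt (fun t => t * φ (x / t)) (φ (x / t) - x / t * φ' (x / t)) t := by
    intro t ht
    have hdiv : HasDerivAt (fun t => x / t) (x * -(t ^ 2)⁻¹) t := by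
      simpa only [div_eq_mul_inv] using (hasDerivAt_inv (ne_of_gt ht)).const_mul x
    refine ((hasDerivAt_id' t).mul ((hφ _ (div_pos hx ht)).comp t hdiv)).congr_deriv ?_
    have ht₀ : t ≠ 0 := ne_of_gt ht
    simp only [Function.comp_apply]
    field_simp
    ring
  refine StrictAntiOn.strictConcaveOn_of_deriv (convex_Ioi 0)
    (fun t ht => (hderiv t ht).continuousAt.continuousWithinAt) ?_
  rw [interior_Ioi]
  intro t₁ ht₁ t₂ ht₂ ht
  rw [(hderiv t₁ ht₁).deriv, (hderiv t₂ ht₂).deriv]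
  exact strictMonoOn_sub_mul_of_hasDerivAt hφ hφ' (div_pos hx ht₂) (div_pos hx ht₁)
    (div_lt_div_of_pos_left hx ht₁ ht)

lemma ConcaveOn.strictAntiOn_of_lt_of_tendsto_nhdsGT_zero {g : ℝ → ℝ} {L : ℝ}
    (hg : ConcaveOn ℝ (Ioi 0) g) (hlt : ∀ t ∈ Ioi (0 : ℝ), g t < L)
    (hlim : Tendsto g (𝓝[>] 0) (𝓝 L)) : StrictAntiOn g (Ioi 0) := by
  intro t₁ ht₁ t₂ ht₂ ht
  by_contra! hle
  obtain ⟨t, hgt, htt⟩ :=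
    ((hlim.eventually (lt_mem_nhds (hlt t₁ ht₁))).and (Ioo_mem_nhdsGT ht₁)).exists
  exact (hg.left_le_of_le_right'' htt.1 ht₂ htt.2.le ht hle).not_gt hgt

lemma hasDerivAt_arsinhp (hp : 0 < p) {y : ℝ} (hy : 0 ≤ y) :
    HasDerivAt (arsinhp p) ((1 + y ^ p) ^ (-1 / p)) y := by
  have hcont : ContinuousOn (fun t : ℝ => (1 + t ^ p) ^ (-1 / p)) (Ioi (-1)) :=
    fun t ht => (continuousAt_one_add_rpow_rpow hp _ ht).continuousWithinAt
  refine intervalIntegral.integral_hasDerivAt_right ?_ ?_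
    (continuousAt_one_add_rpow_rpow hp _ (by linarith))
  · refine (hcont.mono fun t ht => ?_).intervalIntegrable
    rw [uIcc_of_le hy] at ht
    exact lt_of_lt_of_le (by norm_num) ht.1
  · exact hcont.stronglyMeasurableAtFilter isOpen_Ioi y (by simp only [mem_Ioi]; linarith)

lemma arsinhp_zero : arsinhp p 0 = 0 := intervalIntegral.integral_same

lemma continuousOn_arsinhp (hp : 0 < p) : ContinuousOn (arsinhp p) (Ici 0) :=
  fun _ hy => (hasDerivAt_arsinhp hp hy).continuousAt.continuousWithinAt

lemma strictMonoOn_arsinhp (hp : 0 < p) : StrictMonoOn (arsinhp p) (Ici 0) := by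
  refine strictMonoOn_of_hasDerivWithinAt_pos (f' := fun y => (1 + y ^ p) ^ (-1 / p))
    (convex_Ici 0) (continuousOn_arsinhp hp) ?_ ?_ <;>
    rw [interior_Ici]
  · exact fun y hy => (hasDerivAt_arsinhp hp (le_of_lt hy)).hasDerivWithinAt
  · exact fun y hy => rpow_pos_of_pos (one_add_rpow_pos hp (by linarith [mem_Ioi.1 hy])) _

lemma mapsTo_arsinhp (hp : 0 < p) : MapsTo (arsinhp p) (Ici 0) (Ici 0) := fun a ha => by
  simpa only [mem_Ici, arsinhp_zero] using (strictMonoOn_arsinhp hp).monotoneOn self_mem_Ici ha ha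

lemma log_one_add_le_arsinhp (hp : 1 ≤ p) {y : ℝ} (hy : 0 ≤ y) :
    log (1 + y) ≤ arsinhp p y := by
  have h := sub_le_sub_of_hasDerivAt_le hy (f := fun y => log (1 + y)) (g := arsinhp p)
    (fun t ht => by simpa using ((hasDerivAt_id' t).const_add 1).log (by linarith [ht.1]))
    (fun t ht => hasDerivAt_arsinhp (by linarith) ht.1)
    (fun t ht => inv_one_add_le_one_add_rpow_rpow hp ht.1.le)
  simpa only [add_zero, log_one, sub_zero, arsinhp_zero] using h

lemma arsinhp_le_arsinhp_one_add_log (hp : 0 < p) {y : ℝ} (hy : 1 ≤ y) :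
    arsinhp p y ≤ arsinhp p 1 + log y := by
  have h := sub_le_sub_of_hasDerivAt_le hy (f := arsinhp p) (g := log)
    (fun t ht => hasDerivAt_arsinhp hp (by linarith [ht.1]))
    (fun t ht => hasDerivAt_log (by linarith [ht.1]))
    (fun t ht => one_add_rpow_rpow_le_inv hp (by linarith [ht.1]))
  rw [log_one] at h
  linarith

lemma surjOn_arsinhp (hp : 1 ≤ p) : SurjOn (arsinhp p) (Ici 0) (Ici 0) := by
  intro b hb
  have hle : b ≤ arsinhp p (exp b) :=
    calc b = log (exp b) := (log_exp b).symm
      _ ≤ log (1 + exp b) := log_le_log (exp_pos b) (by linarith)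
      _ ≤ arsinhp p (exp b) := log_one_add_le_arsinhp hp (exp_pos b).le
  obtain ⟨y, hy, hyb⟩ := intermediate_value_Icc (exp_pos b).le
    ((continuousOn_arsinhp (by linarith)).mono Icc_subset_Ici_self)
    (show b ∈ Icc (arsinhp p 0) (arsinhp p (exp b)) from ⟨by rw [arsinhp_zero]; exact hb, hle⟩)
  exact ⟨y, hy.1, hyb⟩

lemma arsinhp_sinhp (hp : 1 ≤ p) {b : ℝ} (hb : 0 ≤ b) : arsinhp p (sinhp p b) = b :=
  (surjOn_arsinhp hp).rightInvOn_invFunOn hb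

lemma sinhp_nonneg (hp : 1 ≤ p) {b : ℝ} (hb : 0 ≤ b) : 0 ≤ sinhp p b :=
  (surjOn_arsinhp hp).mapsTo_invFunOn hb

lemma sinhp_arsinhp (hp : 0 < p) {a : ℝ} (ha : 0 ≤ a) : sinhp p (arsinhp p a) = a :=
  (strictMonoOn_arsinhp hp).injOn.leftInvOn_invFunOn ha

lemma strictMonoOn_sinhp (hp : 1 ≤ p) : StrictMonoOn (sinhp p) (Ici 0) := fun a ha b hb hab => by
  rwa [← (strictMonoOn_arsinhp (p := p) (by linarith)).lt_iff_lt (sinhp_nonneg hp ha) (sinhp_nonneg hp hb),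
    arsinhp_sinhp hp ha, arsinhp_sinhp hp hb]

lemma sinhp_zero (hp : 0 < p) : sinhp p 0 = 0 := by
  simpa only [arsinhp_zero] using sinhp_arsinhp hp le_rfl

lemma sinhp_pos (hp : 1 ≤ p) {b : ℝ} (hb : 0 < b) : 0 < sinhp p b := by
  simpa only [sinhp_zero (by linarith : (0 : ℝ) < p)] using
    strictMonoOn_sinhp hp self_mem_Ici hb.le hb

lemma continuousAt_sinhp (hp : 1 ≤ p) {y : ℝ} (hy : 0 < y) : ContinuousAt (sinhp p) y :=
  (strictMonoOn_sinhp hp).continuousAt_of_image_mem_nhds (Ici_mem_nhds hy) <|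
    mem_of_superset (Ici_mem_nhds (sinhp_pos hp hy)) fun a ha =>
      ⟨arsinhp p a, mapsTo_arsinhp (by linarith) ha, sinhp_arsinhp (by linarith) ha⟩

lemma hasDerivAt_sinhp (hp : 1 ≤ p) {y : ℝ} (hy : 0 < y) :
    HasDerivAt (sinhp p) (coshp p y) y := by
  have hbase : 0 < 1 + sinhp p y ^ p :=
    one_add_rpow_pos (by linarith) (by linarith [sinhp_pos hp hy])
  have h := HasDerivAt.of_local_left_inverse (continuousAt_sinhp hp hy)
    (hasDerivAt_arsinhp (by linarith) (sinhp_pos hp hy).le) (rpow_pos_of_pos hbase _).ne'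
    (eventually_of_mem (Ioi_mem_nhds hy) fun z hz => arsinhp_sinhp hp (le_of_lt hz))
  rwa [neg_div, rpow_neg hbase.le, inv_inv] at h

lemma hasDerivAt_log_sinhp (hp : 1 ≤ p) {y : ℝ} (hy : 0 < y) :
    HasDerivAt (fun y => log (sinhp p y)) (coshp p y / sinhp p y) y :=
  (hasDerivAt_sinhp hp hy).log (sinhp_pos hp hy).ne'

lemma strictAntiOn_coshp_div_sinhp (hp : 1 ≤ p) :
    StrictAntiOn (fun y => coshp p y / sinhp p y) (Ioi 0) :=
  (strictAntiOn_one_add_rpow_rpow_div_self (by linarith)).comp_strictMonoOn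
    ((strictMonoOn_sinhp hp).mono Ioi_subset_Ici_self) fun _ hy => sinhp_pos hp hy

lemma log_sinhp_lt (hp : 1 ≤ p) {u : ℝ} (hu : 0 < u) : log (sinhp p u) < u := by
  have hs := sinhp_pos hp hu
  calc log (sinhp p u) < log (1 + sinhp p u) := log_lt_log hs (by linarith)
    _ ≤ arsinhp p (sinhp p u) := log_one_add_le_arsinhp hp hs.le
    _ = u := arsinhp_sinhp hp hu.le

lemma sub_arsinhp_one_le_log_sinhp (hp : 1 ≤ p) {u : ℝ} (hu : arsinhp p 1 ≤ u) :
    u - arsinhp p 1 ≤ log (sinhp p u) := by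
  have h₀ : 0 ≤ arsinhp p 1 := mapsTo_arsinhp (by linarith) (mem_Ici.2 zero_le_one)
  have h₁ : 1 ≤ sinhp p u := by
    simpa only [sinhp_arsinhp (by linarith : (0 : ℝ) < p) zero_le_one] using
      (strictMonoOn_sinhp hp).monotoneOn h₀ (h₀.trans hu) hu
  have h₂ := arsinhp_le_arsinhp_one_add_log (p := p) (by linarith) h₁
  rw [arsinhp_sinhp hp (h₀.trans hu)] at h₂
  linarith

lemma mul_log_sinhp_div_lt (hp : 1 ≤ p) {x t : ℝ} (hx : 0 < x) (ht : 0 < t) :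
    t * log (sinhp p (x / t)) < x :=
  calc t * log (sinhp p (x / t)) < t * (x / t) :=
        mul_lt_mul_of_pos_left (log_sinhp_lt hp (div_pos hx ht)) ht
    _ = x := mul_div_cancel₀ x ht.ne'

lemma tendsto_mul_log_sinhp_div (hp : 1 ≤ p) {x : ℝ} (hx : 0 < x) :
    Tendsto (fun t => t * log (sinhp p (x / t))) (𝓝[>] 0) (𝓝 x) := by
  have hlarge : Tendsto (fun t : ℝ => x / t) (𝓝[>] 0) atTop := by
    simpa only [div_eq_mul_inv] using tendsto_inv_nhdsGT_zero.const_mul_atTop hx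
  have hlower : ∀ᶠ t in 𝓝[>] 0, x - arsinhp p 1 * t ≤ t * log (sinhp p (x / t)) := by
    filter_upwards [self_mem_nhdsWithin, hlarge.eventually_ge_atTop (arsinhp p 1)] with t ht hxt
    have h := mul_le_mul_of_nonneg_left (sub_arsinhp_one_le_log_sinhp hp hxt) (le_of_lt ht)
    rwa [mul_sub, mul_div_cancel₀ x (ne_of_gt ht), mul_comm t] at h
  have hupper : ∀ᶠ t in 𝓝[>] 0, t * log (sinhp p (x / t)) ≤ x := by
    filter_upwards [self_mem_nhdsWithin] with t ht
    exact (mul_log_sinhp_div_lt hp hx ht).le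
  have hline : Tendsto (fun t => x - arsinhp p 1 * t) (𝓝[>] 0) (𝓝 x) := by
    have h : Continuous (fun t => x - arsinhp p 1 * t) := by fun_prop
    simpa using (h.tendsto 0).mono_left nhdsWithin_le_nhds
  exact tendsto_of_tendsto_of_tendsto_of_le_of_le' hline tendsto_const_nhds hlower hupper

theorem stmt18 (p : ℝ) (hp : 1 < p) (x : ℝ) (hx : 0 < x) :
    StrictAntiOn (fun t => sinhp p (x / t) ^ t) (Set.Ioi 0) ∧
    ConcaveOn ℝ (Set.Ioi 0) (fun t => Real.log (sinhp p (x / t) ^ t)) := by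
  have hconcave : StrictConcaveOn ℝ (Ioi 0) (fun t => t * log (sinhp p (x / t))) :=
    strictConcaveOn_mul_comp_div hx (fun u hu => hasDerivAt_log_sinhp hp.le hu)
      (strictAntiOn_coshp_div_sinhp hp.le)
  have hanti : StrictAntiOn (fun t => t * log (sinhp p (x / t))) (Ioi 0) :=
    hconcave.concaveOn.strictAntiOn_of_lt_of_tendsto_nhdsGT_zero
      (fun t ht => mul_log_sinhp_div_lt hp.le hx ht) (tendsto_mul_log_sinhp_div hp.le hx)
  have hpos : ∀ t ∈ Ioi (0 : ℝ), 0 < sinhp p (x / t) :=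
    fun t ht => sinhp_pos hp.le (div_pos hx ht)
  refine ⟨(exp_strictMono.comp_strictAntiOn hanti).congr fun t ht => ?_,
    hconcave.concaveOn.congr fun t ht => (log_rpow (hpos t ht) t).symm⟩
  simp only [Function.comp_apply, rpow_def_of_pos (hpos t ht), mul_comm]
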